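/- If in the setting of the previous equivalence every zero-mean f ∈ V changes sign on a closed set A, then the weight function w can be chosen supported on at most n+1 points of A, where n+1 = dim V (i.e., n is the dimension of the subspace of zero-mean functions in V). -/

import Mathlib

/-!
Let `W` be the zero-mean part of `V`, of dimension at most `n`, and map `X` into `ℝ^dim W` by
`γ x = (b₁ x, …, b_m x)` for a basis `(bₖ)` of `W`. Linear functionals on `ℝ^dim W` composed
with `γ` are exactly the elements of `W`, so the sign hypothesis says that every functional
takes a nonnegative value on the compact set `γ '' A`. By Hahn–Banach, `0` lies in the (compact) convex hull of
`γ '' A`, and by Carathéodory it is a convex combination `∑ wᵢ γ(aᵢ)` of at most `n + 1`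
points with `aᵢ ∈ A`. Then `∑ wᵢ f(aᵢ) = 0` for `f ∈ W`; applied to `g - ∫ g` for `g ∈ V`,
this is the cubature formula.
-/

open MeasureTheory Module Finset

section Convexity

variable {E : Type*}

theorem exists_stdSimplex_sum_smul_eq_of_mem_convexHull [AddCommGroup E] [Module ℝ E]
    [FiniteDimensional ℝ E] {K : Set E} {N : ℕ} (hN : finrank ℝ E ≤ N) {x : E}
    (hx : x ∈ convexHull ℝ K) :
    ∃ w ∈ stdSimplex ℝ (Fin (N + 1)), ∃ z : Fin (N + 1) → E, (∀ i, z i ∈ K) ∧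
      ∑ i, w i • z i = x := by
  obtain ⟨k₀, hk₀⟩ := convexHull_nonempty_iff.mp ⟨x, hx⟩
  obtain ⟨ι, _, z, w, hzK, hz, hw, hw1, rfl⟩ := eq_pos_convex_span_of_mem_convexHull hx
  have hcard : Fintype.card ι ≤ Fintype.card (Fin (N + 1)) := by
    rw [Fintype.card_fin]
    exact hz.card_le_finrank_succ.trans (by gcongr; exact (Submodule.finrank_le _).trans hN)
  obtain ⟨e⟩ := Function.Embedding.nonempty_iff_card_le.mpr hcard
  -- pad the Carathéodory combination with zero weights outside the range of `e`
  have extend_weight_eq_zero : ∀ j ∉ Set.range e, Function.extend e w 0 j = 0 :=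
    fun j hj => Function.extend_apply' _ _ _ fun ⟨i, hi⟩ => hj ⟨i, hi⟩
  refine ⟨Function.extend e w 0, ⟨fun j => ?_, ?_⟩, Function.extend e z fun _ => k₀,
    fun j => ?_, ?_⟩
  · by_cases hj : j ∈ Set.range e
    · obtain ⟨i, rfl⟩ := hj
      simpa [e.injective.extend_apply] using (hw i).le
    · simp [extend_weight_eq_zero j hj]
  · rw [← hw1]
    exact (Fintype.sum_of_injective e e.injective _ _ extend_weight_eq_zero
      fun i => (e.injective.extend_apply _ _ i).symm).symm
  · by_cases hj : j ∈ Set.range e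
    · obtain ⟨i, rfl⟩ := hj
      simpa [e.injective.extend_apply] using hzK (Set.mem_range_self i)
    · simpa [Function.extend_apply' _ _ _ fun ⟨i, hi⟩ => hj ⟨i, hi⟩] using hk₀
  · refine (Fintype.sum_of_injective e e.injective _ _ (fun j hj => ?_) fun i => ?_).symm
    · simp [extend_weight_eq_zero j hj]
    · simp [e.injective.extend_apply]

variable [NormedAddCommGroup E] [NormedSpace ℝ E] [FiniteDimensional ℝ E]

theorem IsCompact.convexHull {K : Set E} (hK : IsCompact K) : IsCompact (convexHull ℝ K) := by
  set N := finrank ℝ E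
  have hull_eq : _root_.convexHull ℝ K =
      (fun p : (Fin (N + 1) → ℝ) × (Fin (N + 1) → E) => ∑ i, p.1 i • p.2 i) ''
        (stdSimplex ℝ (Fin (N + 1)) ×ˢ Set.univ.pi fun _ => K) := by
    apply Set.Subset.antisymm
    · intro x hx
      obtain ⟨w, hw, z, hzK, rfl⟩ := exists_stdSimplex_sum_smul_eq_of_mem_convexHull le_rfl hx
      exact ⟨(w, z), ⟨hw, fun i _ => hzK i⟩, rfl⟩
    · rintro _ ⟨⟨w, z⟩, ⟨hw, hzK⟩, rfl⟩
      exact (convex_convexHull ℝ K).sum_mem (fun i _ => hw.1 i) hw.2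
        fun i _ => subset_convexHull ℝ K (hzK i trivial)
  rw [hull_eq]
  exact ((isCompact_stdSimplex ℝ _).prod (isCompact_univ_pi fun _ => hK)).image (by fun_prop)

theorem zero_mem_convexHull_of_forall_exists_nonneg {K : Set E} (hK : IsCompact K)
    (h : ∀ φ : StrongDual ℝ E, ∃ x ∈ K, 0 ≤ φ x) : (0 : E) ∈ convexHull ℝ K := by
  by_contra h0
  obtain ⟨φ, u, hφ, hu⟩ :=
    geometric_hahn_banach_closed_point (convex_convexHull ℝ K) hK.convexHull.isClosed h0
  obtain ⟨x, hxK, hx⟩ := h φ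
  linarith [hφ x (subset_convexHull ℝ K hxK), map_zero φ]

end Convexity

section FunctionSpaces

variable {X : Type*} [TopologicalSpace X]

theorem Submodule.exists_continuous_mem_iff_exists_linearMap (W : Submodule ℝ C(X, ℝ))
    [FiniteDimensional ℝ W] :
    ∃ γ : X → (Fin (finrank ℝ W) → ℝ), Continuous γ ∧ ∀ f : C(X, ℝ),
      f ∈ W ↔ ∃ φ : (Fin (finrank ℝ W) → ℝ) →ₗ[ℝ] ℝ, ∀ x, f x = φ (γ x) := by
  let b := finBasis ℝ W
  refine ⟨fun x k => (b k : C(X, ℝ)) x, continuous_pi fun k => (b k : C(X, ℝ)).continuous,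
    fun f => ⟨fun hf => ?_, fun ⟨φ, hφ⟩ => ?_⟩⟩
  · refine ⟨∑ k, b.repr ⟨f, hf⟩ k • LinearMap.proj k, fun x => ?_⟩
    have hrepr := congrArg (fun g : W => (g : C(X, ℝ)) x) (b.sum_repr ⟨f, hf⟩)
    simp only [Submodule.coe_sum, Submodule.coe_smul, ContinuousMap.sum_apply,
      ContinuousMap.smul_apply, smul_eq_mul] at hrepr
    simp [hrepr]
  · have hf : f = ∑ k, φ (Pi.single k 1) • (b k : C(X, ℝ)) := by
      ext x
      rw [hφ]
      beta_reduce
      rw [← (Pi.basisFun ℝ _).sum_repr (fun k => (b k : C(X, ℝ)) x), map_sum]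
      simp [ContinuousMap.sum_apply, mul_comm]
    rw [hf]
    exact W.sum_mem fun k _ => W.smul_mem _ (b k).2

theorem Submodule.exists_stdSimplex_sum_mul_eq_zero (W : Submodule ℝ C(X, ℝ))
    [FiniteDimensional ℝ W] {A : Set X} (hA : IsCompact A) {N : ℕ} (hN : finrank ℝ W ≤ N)
    (h : ∀ f ∈ W, ∃ x ∈ A, 0 ≤ f x) :
    ∃ w ∈ stdSimplex ℝ (Fin (N + 1)), ∃ a : Fin (N + 1) → X, (∀ i, a i ∈ A) ∧
      ∀ f ∈ W, ∑ i, w i * f (a i) = 0 := by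
  obtain ⟨γ, hγ, hW⟩ := W.exists_continuous_mem_iff_exists_linearMap
  have h0 : (0 : Fin (finrank ℝ W) → ℝ) ∈ convexHull ℝ (γ '' A) := by
    refine zero_mem_convexHull_of_forall_exists_nonneg (hA.image hγ) fun φ => ?_
    obtain ⟨x, hxA, hx⟩ := h ⟨φ ∘ γ, φ.continuous.comp hγ⟩ ((hW _).mpr ⟨φ, fun _ => rfl⟩)
    exact ⟨γ x, Set.mem_image_of_mem γ hxA, hx⟩
  obtain ⟨w, hw, z, hz, hsum⟩ :=
    exists_stdSimplex_sum_smul_eq_of_mem_convexHull (N := N) (by rwa [finrank_fin_fun]) h0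
  choose a haA hγa using hz
  refine ⟨w, hw, a, haA, fun f hf => ?_⟩
  obtain ⟨φ, hφ⟩ := (hW f).mp hf
  simp only [hφ, hγa, ← smul_eq_mul, ← map_smul, ← map_sum, hsum, map_zero]

end FunctionSpaces

theorem Finset.sum_image_fiberwise_mul {ι X R : Type*} [NonUnitalNonAssocSemiring R]
    [DecidableEq X] (s : Finset ι) (a : ι → X) (w : ι → R) (g : X → R) :
    ∑ x ∈ s.image a, (∑ i ∈ s with a i = x, w i) * g x = ∑ i ∈ s, w i * g (a i) :=
  sum_image' _ fun i _ => by
    rw [sum_mul]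
    exact sum_congr rfl fun j hj => by rw [(mem_filter.mp hj).2]

section ZeroMean

variable {X : Type*} [TopologicalSpace X] [CompactSpace X] [MeasurableSpace X]
  [OpensMeasurableSpace X] (μ : Measure X) [IsFiniteMeasure μ]

theorem ContinuousMap.integrable_of_compactSpace (f : C(X, ℝ)) : Integrable f μ :=
  f.continuous.integrable_of_hasCompactSupport (.of_compactSpace _)

def zeroMeanSubmodule (V : Submodule ℝ C(X, ℝ)) : Submodule ℝ C(X, ℝ) where
  carrier := {f | f ∈ V ∧ ∫ x, f x ∂μ = 0}
  add_mem' {f g} hf hg := ⟨V.add_mem hf.1 hg.1, by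
    simp [integral_add (f.integrable_of_compactSpace μ) (g.integrable_of_compactSpace μ),
      hf.2, hg.2]⟩
  zero_mem' := ⟨V.zero_mem, by simp⟩
  smul_mem' c f hf := ⟨V.smul_mem c hf.1, by simp [integral_const_mul, hf.2]⟩

theorem zeroMeanSubmodule_le (V : Submodule ℝ C(X, ℝ)) : zeroMeanSubmodule μ V ≤ V :=
  fun _ hf => hf.1

theorem finrank_zeroMeanSubmodule_lt [NeZero μ] {V : Submodule ℝ C(X, ℝ)} [FiniteDimensional ℝ V]
    (hone : ContinuousMap.const X 1 ∈ V) : finrank ℝ (zeroMeanSubmodule μ V) < finrank ℝ V := by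
  refine Submodule.finrank_lt_finrank_of_lt
    (lt_of_le_of_ne (zeroMeanSubmodule_le μ V) fun h => ?_)
  have := (h.ge hone).2
  simp [(measureReal_univ_pos (μ := μ)).ne'] at this

theorem sub_const_integral_mem_zeroMeanSubmodule [IsProbabilityMeasure μ]
    {V : Submodule ℝ C(X, ℝ)} (hconst : ∀ c : ℝ, ContinuousMap.const X c ∈ V)
    {g : C(X, ℝ)} (hg : g ∈ V) :
    g - ContinuousMap.const X (∫ x, g x ∂μ) ∈ zeroMeanSubmodule μ V :=
  ⟨V.sub_mem hg (hconst _), by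
    simp [integral_sub (g.integrable_of_compactSpace μ) (integrable_const _)]⟩

end ZeroMean

/-- If every zero-mean function in the `(n+1)`-dimensional space `V` changes sign on
the closed set `A`, then a cubature rule supported on at most `n+1` points of `A`
exists. -/
theorem cubature_support_card
    {X : Type*} [MetricSpace X] [CompactSpace X] [MeasurableSpace X]
    [BorelSpace X] (μ : Measure X) [IsProbabilityMeasure μ]
    (n : ℕ) (V : Submodule ℝ C(X, ℝ))
    (hdim : Module.finrank ℝ V = n + 1)
    (hconst : ∀ c : ℝ, (ContinuousMap.const X c) ∈ V)
    (A : Set X) (hA : IsClosed A)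
    (hsign : ∀ f ∈ V, ∫ x, f x ∂μ = 0 → (∃ x ∈ A, 0 ≤ f x) ∧ (∃ y ∈ A, f y ≤ 0)) :
    ∃ (s : Finset X) (w : X → ℝ), ↑s ⊆ A ∧ s.card ≤ n + 1 ∧
      (∀ x, 0 ≤ w x ∧ w x ≤ 1) ∧
      ∀ g ∈ V, ∫ x, g x ∂μ = ∑ a ∈ s, w a * g a := by
  classical
  have : FiniteDimensional ℝ V := Module.finite_of_finrank_eq_succ hdim
  have := Submodule.finiteDimensional_of_le (zeroMeanSubmodule_le μ V)
  have hrank : finrank ℝ (zeroMeanSubmodule μ V) ≤ n := by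
    have := finrank_zeroMeanSubmodule_lt μ (hconst 1)
    omega
  obtain ⟨w, hw, a, haA, hwa⟩ := (zeroMeanSubmodule μ V).exists_stdSimplex_sum_mul_eq_zero
    hA.isCompact hrank fun f hf => (hsign f hf.1 hf.2).1
  refine ⟨univ.image a, fun x => ∑ i with a i = x, w i,
    by simpa [Set.range_subset_iff] using haA, card_image_le.trans (by simp),
    fun x => ⟨sum_nonneg fun i _ => hw.1 i, ?_⟩, fun g hg => ?_⟩
  · exact hw.2 ▸ sum_le_sum_of_subset_of_nonneg (filter_subset _ _) fun i _ _ => hw.1 i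
  · rw [sum_image_fiberwise_mul]
    have := hwa _ (sub_const_integral_mem_zeroMeanSubmodule μ hconst hg)
    simp only [ContinuousMap.sub_apply, ContinuousMap.const_apply, mul_sub, sum_sub_distrib,
      ← sum_mul, hw.2, one_mul] at this
    linarith
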